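/- arXiv:2210.13309 — 6 statements merged into one kernel-verified Lean document; each statement's English description precedes it below -/
import Mathlib

section
/- Let t⁽¹⁾, …, t⁽ᵏ⁾ ∈ ℝ^ℓ be probability vectors (entries nonnegative, summing to 1). Then there exists N ∈ ℕ and a probability vector a ∈ ℝ^N such that for each 1 ≤ j ≤ k there is a partition Y₁ ∪ ⋯ ∪ Y_ℓ of {1,…,N} with ∑_{p ∈ Y_i} a_p = t_i⁽ʲ⁾ for all 1 ≤ i ≤ ℓ. -/
open Finset

/-
Take `a` to be the product of the distributions `t⁽¹⁾, …, t⁽ᵏ⁾` on the `ℓ ^ k` points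
`g : Fin k → Fin ℓ`, with `a g = ∏ⱼ t⁽ʲ⁾ (g j)`. Its `j`-th marginal is `t⁽ʲ⁾`, so the fibres of
the coordinate map `g ↦ g j` form the required partition for `t⁽ʲ⁾`.
-/

section ProductWeights

variable {ι α R : Type*} [Fintype ι] [DecidableEq ι] [Fintype α] [CommSemiring R]
  {f : ι → α → R}

theorem Fintype.sum_prod_apply_eq_one (hf : ∀ j, ∑ x, f j x = 1) :
    ∑ g : ι → α, ∏ j, f j (g j) = 1 := by
  rw [← Fintype.prod_sum, Fintype.prod_eq_one _ hf]

theorem Fintype.sum_prod_apply_filter_eq [DecidableEq α] (hf : ∀ j, ∑ x, f j x = 1) (j : ι)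
    (i : α) : ∑ g ∈ univ.filter (fun g : ι → α => g j = i), ∏ j', f j' (g j') = f j i := by
  rw [← piFinset_univ,
    ← piFinset_update_singleton_eq_filter_piFinset_eq (fun _ ↦ univ) j (Finset.mem_univ i),
    ← prod_univ_sum, Fintype.prod_eq_single j fun j' hj' => by simp [hj', hf]]
  simp

end ProductWeights

theorem stmt_0 (k ℓ : ℕ) (t : Fin k → Fin ℓ → ℝ)
    (ht_nonneg : ∀ j i, 0 ≤ t j i) (ht_sum : ∀ j, ∑ i, t j i = 1) :
    ∃ (N : ℕ) (a : Fin N → ℝ),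
      (∀ p, 0 ≤ a p) ∧ (∑ p, a p = 1) ∧
      ∀ j : Fin k, ∃ Y : Fin ℓ → Finset (Fin N),
        (∀ i i', i ≠ i' → Disjoint (Y i) (Y i')) ∧
        (Finset.univ.biUnion Y = Finset.univ) ∧
        (∀ i : Fin ℓ, ∑ p ∈ Y i, a p = t j i) := by
  let e := (Fintype.equivFin (Fin k → Fin ℓ)).symm
  refine ⟨_, fun p => ∏ j, t j (e p j), fun p => prod_nonneg fun j _ => ht_nonneg _ _, ?_,
    fun j => ⟨fun i => univ.filter (e · j = i),
      fun i i' => Set.pairwiseDisjoint_filter _ Set.univ univ (Set.mem_univ i) (Set.mem_univ i'),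
      biUnion_filter_eq_of_maps_to fun _ _ => mem_univ _, fun i => ?_⟩⟩
  · rw [e.sum_comp (fun g => ∏ j, t j (g j)), Fintype.sum_prod_apply_eq_one ht_sum]
  · rw [sum_filter, e.sum_comp (fun g => if g j = i then ∏ j', t j' (g j') else 0), ← sum_filter,
      Fintype.sum_prod_apply_filter_eq ht_sum]
end

section
/- The 3×3 matrix (1/2)·[[1,0,1],[1,1,0],[0,1,1]] is doubly stochastic but not unistochastic. -/
open Matrix

def IsDoublyStochastic {n : ℕ} (X : Matrix (Fin n) (Fin n) ℝ) : Prop :=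
  (∀ i j, 0 ≤ X i j) ∧ (∀ i, ∑ j, X i j = 1) ∧ (∀ j, ∑ i, X i j = 1)

def IsUnistochastic {n : ℕ} (X : Matrix (Fin n) (Fin n) ℝ) : Prop :=
  ∃ U : Matrix (Fin n) (Fin n) ℂ, Uᴴ * U = 1 ∧ U * Uᴴ = 1 ∧
    ∀ i j, X i j = ‖U i j‖^2

/-! Two distinct rows of a unitary matrix are orthogonal. If their supports met in exactly one
column `j₀`, their inner product would be the single nonzero term `U i j₀ * conj (U k j₀)`. The
rows `0` and `1` of the given matrix have supports `{0, 2}` and `{0, 1}`, so no unitary matrix can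
have it as its matrix of squared moduli. -/

theorem Matrix.eq_zero_or_eq_zero_of_mul_conjTranspose_eq_one {m n R : Type*} [Fintype n]
    [DecidableEq m] [Semiring R] [StarRing R] [NoZeroDivisors R] {U : Matrix m n R}
    (hU : U * Uᴴ = 1) {i k : m} (hik : i ≠ k) (j₀ : n)
    (hsupp : ∀ j ≠ j₀, U i j = 0 ∨ U k j = 0) : U i j₀ = 0 ∨ U k j₀ = 0 := by
  have horth : ∑ j, U i j * star (U k j) = 0 := by
    simpa [Matrix.mul_apply, hik] using congrFun (congrFun hU i) k
  rw [Finset.sum_eq_single j₀ (fun j _ hj => by rcases hsupp j hj with h | h <;> simp [h])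
    (by simp)] at horth
  simpa using horth

theorem not_isUnistochastic_of_rows_meet_in_one_column {n : ℕ} {X : Matrix (Fin n) (Fin n) ℝ}
    {i k : Fin n} (hik : i ≠ k) (j₀ : Fin n) (hi : X i j₀ ≠ 0) (hk : X k j₀ ≠ 0)
    (hsupp : ∀ j ≠ j₀, X i j = 0 ∨ X k j = 0) : ¬ IsUnistochastic X := by
  rintro ⟨U, -, hU, hX⟩
  have hzero : ∀ a b, X a b = 0 ↔ U a b = 0 := fun a b => by simp [hX]
  rcases U.eq_zero_or_eq_zero_of_mul_conjTranspose_eq_one hU hik j₀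
    (fun j hj => (hsupp j hj).imp (hzero i j).1 (hzero k j).1) with h | h
  exacts [hi ((hzero i j₀).2 h), hk ((hzero k j₀).2 h)]

theorem stmt_1 :
    IsDoublyStochastic ((1/2 : ℝ) • !![1,0,1;1,1,0;0,1,1]) ∧
    ¬ IsUnistochastic ((1/2 : ℝ) • !![1,0,1;1,1,0;0,1,1]) := by
  refine ⟨⟨?_, ?_, ?_⟩, not_isUnistochastic_of_rows_meet_in_one_column (i := 0) (k := 1)
    (by decide) 0 (by simp) (by simp) ?_⟩
  · intro i j
    fin_cases i <;> fin_cases j <;> norm_num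
  · intro i
    fin_cases i <;> norm_num [Fin.sum_univ_succ]
  · intro j
    fin_cases j <;> norm_num [Fin.sum_univ_succ]
  · intro j hj
    fin_cases j <;> simp at hj ⊢
end

section
/- There is no continuous function f : [-1,1] → [0,1] such that the doubly stochastic matrix Y(x) = [[f(x), 1−f(x)],[1−f(x), f(x)]] satisfies Y(x)·(|x|, −|x|)ᵀ = (x, −x)ᵀ for all x ∈ [-1,1]. -/
/-!
The first row of `Y(x) (|x|, -|x|)ᵀ = (x, -x)ᵀ` reads `(2 f(x) - 1) |x| = x`, which forces `f = 1`
on `(0, 1]` and `f = 0` on `[-1, 0)`. Continuity at `0` within `[-1, 1]` then gives both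
`f 0 = 1` and `f 0 = 0`.
-/

open Matrix

lemma two_mul_sub_one_mul_abs_of_mulVec_eq {a x : ℝ}
    (h : !![a, 1 - a; 1 - a, a] *ᵥ ![|x|, -|x|] = ![x, -x]) : (2 * a - 1) * |x| = x := by
  have h₀ := congrFun h 0
  simp only [mulVec, dotProduct, Fin.sum_univ_two, of_apply, cons_val', cons_val_zero,
    cons_val_one, empty_val', cons_val_fin_one] at h₀
  linarith

lemma eq_one_of_mulVec_eq {a x : ℝ} (hx : 0 < x)
    (h : !![a, 1 - a; 1 - a, a] *ᵥ ![|x|, -|x|] = ![x, -x]) : a = 1 := by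
  have h₀ := two_mul_sub_one_mul_abs_of_mulVec_eq h
  rw [abs_of_pos hx] at h₀
  nlinarith

lemma eq_zero_of_mulVec_eq {a x : ℝ} (hx : x < 0)
    (h : !![a, 1 - a; 1 - a, a] *ᵥ ![|x|, -|x|] = ![x, -x]) : a = 0 := by
  have h₀ := two_mul_sub_one_mul_abs_of_mulVec_eq h
  rw [abs_of_neg hx] at h₀
  nlinarith

theorem stmt_3 :
    ¬ ∃ f : ℝ → ℝ, ContinuousOn f (Set.Icc (-1 : ℝ) 1) ∧
      (∀ x ∈ Set.Icc (-1 : ℝ) 1, f x ∈ Set.Icc (0 : ℝ) 1) ∧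
      (∀ x ∈ Set.Icc (-1 : ℝ) 1,
        (!![f x, 1 - f x; 1 - f x, f x]) *ᵥ ![|x|, -|x|] = ![x, -x]) := by
  rintro ⟨f, hcont, -, hmul⟩
  have hc : ContinuousWithinAt f (Set.Icc (-1) 1) 0 := hcont 0 (by norm_num)
  have hright : f 0 = 1 :=
    (hc.mono fun x hx => ⟨by linarith [hx.1], hx.2⟩).eq_const_of_mem_closure
      (s := Set.Ioc 0 1) (by simp [closure_Ioc zero_ne_one])
      fun x hx => eq_one_of_mulVec_eq hx.1 (hmul x ⟨by linarith [hx.1], hx.2⟩)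
  have hleft : f 0 = 0 :=
    (hc.mono fun x hx => ⟨hx.1, by linarith [hx.2]⟩).eq_const_of_mem_closure
      (s := Set.Ico (-1) 0) (by simp [closure_Ico (show (-1 : ℝ) ≠ 0 by norm_num)])
      fun x hx => eq_zero_of_mulVec_eq hx.2 (hmul x ⟨hx.1, by linarith [hx.2]⟩)
  exact one_ne_zero (hright.symm.trans hleft)
end

section
/- Suppose X : [-1,1] → M₃(ℝ) is defined by X(x) = sin²(x)·I + cos²(x)·P where P is the cyclic permutation matrix sending e₁↦e₃, e₂↦e₁, e₃↦e₂ (so X(x) = [[sin²x, cos²x, 0],[0, sin²x, cos²x],[cos²x, 0, sin²x]]). Then X(x) is doubly stochastic for every x ∈ [-1,1], but X cannot be written as a finite convex combination ∑_{k=1}^ℓ t_k Q_k where each Q_k : [-1,1] → M₃(ℝ) is continuous with Q_k(x) unistochastic for all x, and (t₁,…,t_ℓ) is a probability vector. -/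
/-!
Every entry of `X x` that vanishes forces the corresponding entry of each `U k x` with `t k > 0`
to vanish, so each such `U k x` is a unitary supported on the pattern of `I + P`. Orthogonality
of its first two columns then gives `U₀₀ U₀₁ = 0`, while its first row has unit norm, so
`|U₀₀|² ∈ {0, 1}`. By continuity and connectedness of `[-1, 1]`, `|U₀₀(x)|²` is constant; it
vanishes at `x = 0` because `X(0)₀₀ = sin² 0 = 0`, hence everywhere, contradicting
`X(1)₀₀ = sin² 1 > 0`.
-/

open Matrix

lemma isDoublyStochastic_circulant {a b : ℝ} (ha : 0 ≤ a) (hb : 0 ≤ b) (hab : a + b = 1) :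
    IsDoublyStochastic !![a, b, 0; 0, a, b; b, 0, a] := by
  refine ⟨fun i j => ?_, fun i => ?_, fun j => ?_⟩
  · fin_cases i <;> fin_cases j <;> simp [ha, hb]
  · fin_cases i <;> simp [Fin.sum_univ_three, hab, add_comm b a]
  · fin_cases j <;> simp [Fin.sum_univ_three, hab, add_comm b a]

lemma eq_zero_of_sum_mul_eq_zero {ι : Type*} [Fintype ι] {t f : ι → ℝ} (ht : ∀ k, 0 ≤ t k)
    (hf : ∀ k, 0 ≤ f k) (h : ∑ k, t k * f k = 0) {k : ι} (hk : 0 < t k) : f k = 0 := by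
  have hterm := (Finset.sum_eq_zero_iff_of_nonneg fun k _ => mul_nonneg (ht k) (hf k)).mp h k
    (Finset.mem_univ k)
  exact (mul_eq_zero.mp hterm).resolve_left hk.ne'

lemma sq_norm_apply_zero_zero_eq_zero_or_one {M : Matrix (Fin 3) (Fin 3) ℂ} (hM : Mᴴ * M = 1)
    (h02 : M 0 2 = 0) (h10 : M 1 0 = 0) (h21 : M 2 1 = 0) :
    ‖M 0 0‖ ^ 2 = 0 ∨ ‖M 0 0‖ ^ 2 = 1 := by
  have hcols : M 0 0 = 0 ∨ M 0 1 = 0 := by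
    simpa [mul_apply, Fin.sum_univ_three, h10, h21] using congrFun (congrFun hM 0) 1
  have hrow : ‖M 0 0‖ ^ 2 + ‖M 0 1‖ ^ 2 = 1 := by
    have h := congrFun (congrFun (mul_eq_one_comm.mp hM : M * Mᴴ = 1) 0) 0
    simp only [mul_apply, conjTranspose_apply, Fin.sum_univ_three, h02, Complex.star_def,
      Complex.mul_conj', norm_zero, one_apply_eq] at h
    norm_cast at h
    simpa using h
  rcases hcols with h | h
  · simp [h]
  · right
    simpa [h] using hrow

theorem stmt_6 (X : ℝ → Matrix (Fin 3) (Fin 3) ℝ)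
    (hX : ∀ x, X x =
      !![Real.sin x ^ 2, Real.cos x ^ 2, 0;
         0, Real.sin x ^ 2, Real.cos x ^ 2;
         Real.cos x ^ 2, 0, Real.sin x ^ 2]) :
    (∀ x ∈ Set.Icc (-1 : ℝ) 1, IsDoublyStochastic (X x)) ∧
    ¬ ∃ (ℓ : ℕ) (t : Fin ℓ → ℝ) (U : Fin ℓ → ℝ → Matrix (Fin 3) (Fin 3) ℂ),
        (∀ k, 0 ≤ t k) ∧ (∑ k, t k = 1) ∧
        (∀ k, ContinuousOn (U k) (Set.Icc (-1 : ℝ) 1)) ∧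
        (∀ k, ∀ x ∈ Set.Icc (-1 : ℝ) 1, (U k x)ᴴ * U k x = 1) ∧
        (∀ x ∈ Set.Icc (-1 : ℝ) 1, ∀ i j,
          X x i j = ∑ k, t k * (‖U k x i j‖)^2) := by
  refine ⟨fun x _ => hX x ▸ isDoublyStochastic_circulant (sq_nonneg _) (sq_nonneg _)
    (Real.sin_sq_add_cos_sq x), ?_⟩
  rintro ⟨ℓ, t, U, ht, -, hcont, hunit, hrep⟩
  have hvanish : ∀ x ∈ Set.Icc (-1 : ℝ) 1, ∀ i j, X x i j = 0 →
      ∀ k, 0 < t k → ‖U k x i j‖ ^ 2 = 0 := fun x hx i j h k hk =>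
    eq_zero_of_sum_mul_eq_zero ht (fun _ => sq_nonneg _) ((hrep x hx i j).symm.trans h) hk
  have hentry : ∀ x ∈ Set.Icc (-1 : ℝ) 1, ∀ i j, X x i j = 0 →
      ∀ k, 0 < t k → U k x i j = 0 := fun x hx i j h k hk => by
    simpa using hvanish x hx i j h k hk
  have hconst : ∀ k, 0 < t k → ‖U k 1 0 0‖ ^ 2 = ‖U k 0 0 0‖ ^ 2 := fun k hk =>
    isPreconnected_Icc.constant_of_mapsTo (T := {0, 1}) (f := fun x => ‖U k x 0 0‖ ^ 2)
      (Set.toFinite _).isDiscrete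
      (((continuous_apply_apply 0 0).norm.pow 2).comp_continuousOn (hcont k))
      (fun x hx => sq_norm_apply_zero_zero_eq_zero_or_one (hunit k x hx)
        (hentry x hx 0 2 (by simp [hX]) k hk) (hentry x hx 1 0 (by simp [hX]) k hk)
        (hentry x hx 2 1 (by simp [hX]) k hk))
      (x := 1) (y := 0) (by norm_num) (by norm_num)
  have hsum : ∑ k, t k * ‖U k 1 0 0‖ ^ 2 = 0 := Finset.sum_eq_zero fun k _ => by
    rcases (ht k).eq_or_lt with hk | hk
    · simp [← hk]
    · rw [hconst k hk, hvanish 0 (by norm_num) 0 0 (by simp [hX]) k hk, mul_zero]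
  have hsin : Real.sin 1 = 0 := by simpa [hX] using (hrep 1 (by norm_num) 0 0).trans hsum
  exact (Real.sin_pos_of_pos_of_lt_pi one_pos (by linarith [Real.pi_gt_three])).ne' hsin
end

section
/- Let A = (A_k)_{k≥1} and B = (B_k)_{k≥1} be bounded sequences of self-adjoint n×n complex matrices such that for every k there exists a doubly stochastic matrix X_k with X_k·λ(B_k) = λ(A_k). Then there exist unitaries U₁, …, U_{2^{n−1}} in ℓ_∞(ℕ, M_n(ℂ)) (i.e., bounded sequences of unitary matrices) such that A = ∑_{i=1}^{2^{n−1}} (1/2^{n−1}) U_i* B U_i, where operations are taken coordinatewise. -/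
open Matrix

/-
If `p` is a self-adjoint unitary, the two unitaries `√(1-μ) ± i √μ p` average the conjugates of
`b` to `(1-μ) b + μ p b p`; for a transposition matrix `p` and a diagonal `b` this is a T-transform
of the diagonal. A vector `x` majorized by `y` (as `λ(A) = X λ(B)` is, `X` doubly stochastic) is
reached from `y` by `n - 1` T-transforms interleaved with transpositions: match the largest
coordinate of `x` by a T-transform between the entries of `y` closest to it from above and from
below, discard that coordinate, and recurse. Hence `diag λ(A)` is the average of `2^(n-1)` unitary
conjugates of `diag λ(B)`, and conjugating by the diagonalizing unitaries gives the claim for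
every `k`.
-/

open Finset

section UnitaryAverage

variable {R : Type*} [Ring R] [StarRing R] [Algebra ℂ R]

def IsDyadicUnitaryAverage (k : ℕ) (a b : R) : Prop :=
  ∃ u : Fin (2 ^ k) → R, (∀ i, u i ∈ unitary R) ∧
    a = ∑ i, ((1 : ℂ) / 2 ^ k) • (star (u i) * b * u i)

namespace IsDyadicUnitaryAverage

theorem refl (k : ℕ) (a : R) : IsDyadicUnitaryAverage k a a := by
  refine ⟨fun _ => 1, fun _ => one_mem _, ?_⟩
  simp [← Nat.cast_smul_eq_nsmul ℂ, smul_smul]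

theorem trans {k l : ℕ} {a b c : R} (hab : IsDyadicUnitaryAverage k a b)
    (hbc : IsDyadicUnitaryAverage l b c) : IsDyadicUnitaryAverage (k + l) a c := by
  obtain ⟨u, hu, rfl⟩ := hab
  obtain ⟨v, hv, rfl⟩ := hbc
  let e : Fin (2 ^ (k + l)) ≃ Fin (2 ^ k) × Fin (2 ^ l) :=
    (finCongr (pow_add 2 k l)).trans finProdFinEquiv.symm
  refine ⟨fun m => v (e m).2 * u (e m).1, fun m => mul_mem (hv _) (hu _), ?_⟩
  rw [← e.symm.sum_comp, Fintype.sum_prod_type]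
  simp only [Equiv.apply_symm_apply, Finset.mul_sum, Finset.sum_mul, Finset.smul_sum, star_mul,
    smul_mul_assoc, mul_smul_comm, smul_smul, mul_assoc, pow_add]
  congr! 3
  ring

theorem conj {u : R} (hu : u ∈ unitary R) (b : R) :
    IsDyadicUnitaryAverage 0 (star u * b * u) b :=
  ⟨fun _ => u, fun _ => hu, by simp⟩

theorem conj_symm {u : R} (hu : u ∈ unitary R) (b : R) :
    IsDyadicUnitaryAverage 0 b (star u * b * u) := by
  have := conj (Unitary.star_mem hu) (star u * b * u)
  rwa [star_star, ← mul_assoc, ← mul_assoc, Unitary.mul_star_self_of_mem hu, one_mul, mul_assoc,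
    Unitary.mul_star_self_of_mem hu, mul_one] at this

end IsDyadicUnitaryAverage

variable [StarModule ℂ R]

lemma star_smul_one_add_smul_mul_mul {p : R} (hp : IsSelfAdjoint p) (α β : ℂ) (b : R) :
    star (α • 1 + β • p) * b * (α • 1 + β • p) =
      (star α * α) • b + (star α * β) • (b * p) + (star β * α) • (p * b) +
        (star β * β) • (p * b * p) := by
  simp only [star_add, star_smul, star_one, hp.star_eq, add_mul, mul_add, smul_mul_assoc,
    mul_smul_comm, one_mul, mul_one, mul_assoc]
  module

lemma smul_one_add_smul_mem_unitary {p : R} (hpu : p ∈ unitary R) (hp : IsSelfAdjoint p)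
    {α γ : ℂ} (hnorm : star γ * γ = 1 - star α * α) (hcross : star γ * α = -(star α * γ)) :
    α • 1 + γ • p ∈ unitary R := by
  have hpp : p * p = 1 := by simpa [hp.star_eq] using Unitary.star_mul_self_of_mem hpu
  have hstar : star (α • 1 + γ • p) = star α • 1 + star γ • p := by
    rw [star_add, star_smul, star_smul, star_one, hp.star_eq]
  refine Unitary.mem_iff.2 ⟨?_, ?_⟩
  · have := star_smul_one_add_smul_mul_mul hp α γ 1
    simp only [mul_one, one_mul, hpp] at this
    rw [this, hnorm, hcross]
    module
  · have := star_smul_one_add_smul_mul_mul hp (star α) (star γ) 1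
    simp only [← hstar, star_star, mul_one, one_mul, hpp] at this
    rw [this, mul_comm α (star γ), mul_comm γ (star α), mul_comm α (star α), mul_comm γ (star γ),
      hnorm, hcross]
    module

theorem IsDyadicUnitaryAverage.of_isSelfAdjoint_of_mem_unitary {p : R} (hpu : p ∈ unitary R)
    (hp : IsSelfAdjoint p) {μ : ℝ} (hμ : μ ∈ Set.Icc (0 : ℝ) 1) (b : R) :
    IsDyadicUnitaryAverage 1 ((1 - (μ : ℂ)) • b + (μ : ℂ) • (p * b * p)) b := by
  set α : ℂ := ((√(1 - μ) : ℝ) : ℂ)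
  set β : ℂ := ((√μ : ℝ) : ℂ) * Complex.I
  have hαα : star α * α = 1 - μ := by
    simp only [α, Complex.star_def, Complex.conj_ofReal, ← Complex.ofReal_mul,
      Real.mul_self_sqrt (sub_nonneg.2 hμ.2), Complex.ofReal_sub, Complex.ofReal_one]
  have hββ : star β * β = μ := by
    simp only [β, Complex.star_def, map_mul, Complex.conj_ofReal, Complex.conj_I]
    rw [mul_mul_mul_comm, ← Complex.ofReal_mul, Real.mul_self_sqrt hμ.1]
    simp
  have hαβ : star β * α = -(star α * β) := by
    simp only [α, β, Complex.star_def, map_mul, Complex.conj_ofReal, Complex.conj_I]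
    ring
  have hnorm : star β * β = 1 - star α * α := by rw [hαα, hββ]; ring
  refine ⟨![α • 1 + β • p, α • 1 + (-β) • p], fun i => ?_, ?_⟩
  · fin_cases i
    · exact smul_one_add_smul_mem_unitary hpu hp hnorm hαβ
    · exact smul_one_add_smul_mem_unitary hpu hp (by rw [star_neg, neg_mul_neg, hnorm])
        (by rw [star_neg, neg_mul, hαβ, mul_neg])
  · change _ = ∑ i : Fin 2, _
    simp only [Fin.sum_univ_two, Matrix.cons_val_zero, Matrix.cons_val_one,
      star_smul_one_add_smul_mul_mul hp, star_neg, mul_neg, neg_mul, neg_neg, hαα, hββ, hαβ]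
    module

end UnitaryAverage

namespace Matrix

variable {ι α : Type*} [DecidableEq ι]

theorem isSelfAdjoint_swap [NonAssocSemiring α] [StarRing α] (a b : ι) :
    IsSelfAdjoint (swap α a b) :=
  conjTranspose_swap a b

variable [Fintype ι]

theorem swap_mul_diagonal_mul_swap [NonAssocSemiring α] (d : ι → α) (a b : ι) :
    swap α a b * diagonal d * swap α a b = diagonal (d ∘ Equiv.swap a b) := by
  rw [swap, Equiv.Perm.permMatrix, PEquiv.toMatrix_toPEquiv_mul, PEquiv.mul_toMatrix_toPEquiv,
    submatrix_submatrix, Equiv.symm_swap, Function.comp_id, Function.id_comp,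
    submatrix_diagonal_equiv]

theorem swap_mem_unitary [Semiring α] [StarRing α] (a b : ι) :
    swap α a b ∈ unitary (Matrix ι ι α) := by
  rw [Unitary.mem_iff, (isSelfAdjoint_swap a b).star_eq, and_self]
  exact swap_mul_self a b

end Matrix

def tTransform {ι : Type*} [DecidableEq ι] (μ : ℝ) (a b : ι) (y : ι → ℝ) : ι → ℝ :=
  fun i => (1 - μ) * y i + μ * y (Equiv.swap a b i)

section DiagonalAverage

variable {ι : Type*} [Fintype ι] [DecidableEq ι]

theorem isDyadicUnitaryAverage_diagonal_comp_swap (y : ι → ℝ) (a b : ι) :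
    IsDyadicUnitaryAverage 0 (diagonal fun i => (y (Equiv.swap a b i) : ℂ))
      (diagonal fun i => (y i : ℂ)) := by
  have := IsDyadicUnitaryAverage.conj (swap_mem_unitary a b) (diagonal fun i => (y i : ℂ))
  rwa [(isSelfAdjoint_swap a b).star_eq, swap_mul_diagonal_mul_swap] at this

theorem isDyadicUnitaryAverage_diagonal_tTransform (y : ι → ℝ) (a b : ι) {μ : ℝ}
    (hμ : μ ∈ Set.Icc (0 : ℝ) 1) :
    IsDyadicUnitaryAverage 1 (diagonal fun i => (tTransform μ a b y i : ℂ))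
      (diagonal fun i => (y i : ℂ)) := by
  convert IsDyadicUnitaryAverage.of_isSelfAdjoint_of_mem_unitary (swap_mem_unitary a b)
    (isSelfAdjoint_swap a b) hμ (diagonal fun i => (y i : ℂ)) using 1
  rw [swap_mul_diagonal_mul_swap, ← diagonal_smul, ← diagonal_smul, diagonal_add]
  congr 1
  funext i
  simp [tTransform]

end DiagonalAverage

section PosPartSums

variable {ι : Type*} {T : Finset ι} {f : ι → ℝ}

theorem sum_posPart_sub_le_card_filter_mul {c t : ℝ} (hf : ∀ j ∈ T, f j ≤ c) :
    ∑ j ∈ T, (f j - t)⁺ ≤ #{j ∈ T | t < f j} * (c - t) :=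
  calc ∑ j ∈ T, (f j - t)⁺ ≤ ∑ j ∈ T, if t < f j then c - t else 0 := sum_le_sum fun j hj => by
        split_ifs with hfj
        · rw [posPart_eq_self.2 (by linarith)]
          linarith [hf j hj]
        · rw [posPart_eq_zero.2 (by linarith)]
    _ = #{j ∈ T | t < f j} * (c - t) := by rw [← sum_filter, sum_const, nsmul_eq_mul]

theorem sum_posPart_sub_le_sub_card_filter_mul {a t : ℝ} (hat : a ≤ t) :
    ∑ j ∈ T, (f j - t)⁺ ≤ ∑ j ∈ T, (f j - a)⁺ - #{j ∈ T | t < f j} * (t - a) :=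
  calc ∑ j ∈ T, (f j - t)⁺ ≤ ∑ j ∈ T, ((f j - a)⁺ - if t < f j then t - a else 0) :=
        sum_le_sum fun j _ => by
          split_ifs with hfj
          · rw [posPart_eq_self.2 (by linarith), posPart_eq_self.2 (by linarith)]
            linarith
          · rw [posPart_eq_zero.2 (by linarith), sub_zero]
            exact posPart_nonneg _
    _ = ∑ j ∈ T, (f j - a)⁺ - #{j ∈ T | t < f j} * (t - a) := by
        rw [sum_sub_distrib, ← sum_filter, sum_const, nsmul_eq_mul]

theorem card_filter_mul_le_sum_posPart_sub {b t : ℝ} :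
    #{j ∈ T | b ≤ f j} * (b - t) ≤ ∑ j ∈ T, (f j - t)⁺ :=
  calc (#{j ∈ T | b ≤ f j} : ℝ) * (b - t) = ∑ j ∈ T, if b ≤ f j then b - t else 0 := by
        rw [← sum_filter, sum_const, nsmul_eq_mul]
    _ ≤ ∑ j ∈ T, (f j - t)⁺ := sum_le_sum fun j _ => by
        split_ifs with hfj
        · exact (sub_le_sub_right hfj t).trans (le_posPart _)
        · exact posPart_nonneg _

theorem sum_posPart_sub_le_add_card_filter_mul {a b t : ℝ}
    (hgap : ∀ j ∈ T, f j ≤ a ∨ b ≤ f j) (hat : a ≤ t) (htb : t ≤ b) :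
    ∑ j ∈ T, (f j - a)⁺ ≤ ∑ j ∈ T, (f j - t)⁺ + #{j ∈ T | b ≤ f j} * (t - a) :=
  calc ∑ j ∈ T, (f j - a)⁺ ≤ ∑ j ∈ T, ((f j - t)⁺ + if b ≤ f j then t - a else 0) :=
        sum_le_sum fun j hj => by
          split_ifs with hfj
          · rw [posPart_eq_self.2 (by linarith), posPart_eq_self.2 (by linarith)]
            linarith
          · rw [posPart_eq_zero.2 (by linarith [(hgap j hj).resolve_right hfj]), add_zero]
            exact posPart_nonneg _
    _ = ∑ j ∈ T, (f j - t)⁺ + #{j ∈ T | b ≤ f j} * (t - a) := by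
        rw [sum_add_distrib, ← sum_filter, sum_const, nsmul_eq_mul]

end PosPartSums

section Majorization

variable {ι : Type*}

-- Majorization of `x` by `y` on `s`, tested against the convex functions `(· - t)⁺` rather than
-- through sorted partial sums.
def IsMajorizedOn (s : Finset ι) (x y : ι → ℝ) : Prop :=
  ∑ i ∈ s, x i = ∑ i ∈ s, y i ∧ ∀ t : ℝ, ∑ i ∈ s, (x i - t)⁺ ≤ ∑ i ∈ s, (y i - t)⁺

theorem isMajorizedOn_univ_mulVec [Fintype ι] [DecidableEq ι] {X : Matrix ι ι ℝ}
    (hX : X ∈ doublyStochastic ℝ ι) (y : ι → ℝ) : IsMajorizedOn univ (X *ᵥ y) y := by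
  obtain ⟨hpos, hrow, hcol⟩ := mem_doublyStochastic_iff_sum.1 hX
  have hcol_sum : ∀ f : ι → ℝ, ∑ i, ∑ j, X i j * f j = ∑ j, f j := fun f => by
    rw [Finset.sum_comm]
    simp [← Finset.sum_mul, hcol]
  refine ⟨hcol_sum y, fun t => ?_⟩
  calc ∑ i, ((X *ᵥ y) i - t)⁺ ≤ ∑ i, ∑ j, X i j * (y j - t)⁺ := by
        gcongr with i
        have : (X *ᵥ y) i - t = ∑ j, X i j * (y j - t) := by
          simp [mulVec, dotProduct, mul_sub, Finset.sum_sub_distrib, ← Finset.sum_mul, hrow]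
        rw [this, posPart_def]
        exact sup_le (sum_le_sum fun j _ => mul_le_mul_of_nonneg_left (le_posPart _) (hpos i j))
          (sum_nonneg fun j _ => mul_nonneg (hpos i j) (posPart_nonneg _))
    _ = ∑ j, (y j - t)⁺ := hcol_sum _

namespace IsMajorizedOn

variable {s : Finset ι} {x y : ι → ℝ}

theorem eq_of_card_le_one (h : IsMajorizedOn s x y) (hs : s.card ≤ 1)
    (hoff : ∀ i ∉ s, x i = y i) : x = y := by
  funext i
  by_cases hi : i ∈ s
  · obtain rfl : s = {i} :=
      Finset.eq_singleton_iff_unique_mem.2 ⟨hi, fun j hj => Finset.card_le_one.1 hs j hj i hi⟩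
    simpa using h.1
  · exact hoff i hi

theorem exists_le (h : IsMajorizedOn s x y) {i : ι} (hi : i ∈ s) : ∃ j ∈ s, x i ≤ y j := by
  obtain ⟨j, hj, hmax⟩ := s.exists_max_image y ⟨i, hi⟩
  refine ⟨j, hj, not_lt.1 fun hlt => ?_⟩
  have hy : ∑ k ∈ s, (y k - y j)⁺ = 0 :=
    sum_eq_zero fun k hk => posPart_eq_zero.2 (sub_nonpos.2 (hmax k hk))
  have hx : (x i - y j)⁺ ≤ ∑ k ∈ s, (x k - y j)⁺ :=
    single_le_sum (f := fun k => (x k - y j)⁺) (fun k _ => posPart_nonneg _) hi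
  have := h.2 (y j)
  have := (sub_pos.2 hlt).trans_le (le_posPart _)
  linarith

variable [DecidableEq ι]

theorem comp_swap (h : IsMajorizedOn s x y) {a b : ι} (ha : a ∈ s) (hb : b ∈ s) :
    IsMajorizedOn s x (y ∘ Equiv.swap a b) := by
  have hsum : ∀ f : ℝ → ℝ, ∑ i ∈ s, f (y (Equiv.swap a b i)) = ∑ i ∈ s, f (y i) := fun f =>
    Equiv.Perm.sum_comp _ s (fun i => f (y i)) fun i hi => by
      by_contra his
      exact hi (Equiv.swap_apply_of_ne_of_ne (fun h => his (h ▸ ha)) fun h => his (h ▸ hb))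
  exact ⟨h.1.trans (hsum id).symm, fun t => (h.2 t).trans_eq (hsum fun v => (v - t)⁺).symm⟩

theorem erase (h : IsMajorizedOn s x y) {i₀ p : ι} (hi₀ : i₀ ∈ s) (hp : p ∈ s.erase i₀)
    (hmax : ∀ i ∈ s, x i ≤ x i₀) (hyp : y p ≤ x i₀) (hyi₀ : x i₀ ≤ y i₀)
    (hgap : ∀ j ∈ s.erase i₀, y j ≤ y p ∨ y i₀ ≤ y j) {y' : ι → ℝ} (hy'i₀ : y' i₀ = x i₀)
    (hy'p : y' p + y' i₀ = y p + y i₀) (hy' : ∀ j ∈ (s.erase i₀).erase p, y' j = y j) :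
    IsMajorizedOn (s.erase i₀) x y' := by
  set S := (s.erase i₀).erase p
  set a := y p
  set b := y i₀
  set c := x i₀
  set d := y' p
  have split₀ : ∀ f : ι → ℝ, ∑ i ∈ s, f i = f i₀ + ∑ i ∈ s.erase i₀, f i := fun f =>
    (add_sum_erase s f hi₀).symm
  have splitp : ∀ f : ι → ℝ, ∑ i ∈ s.erase i₀, f i = f p + ∑ i ∈ S, f i := fun f =>
    (add_sum_erase _ f hp).symm
  have hS : ∀ f : ℝ → ℝ, ∑ i ∈ S, f (y' i) = ∑ i ∈ S, f (y i) := fun f =>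
    sum_congr rfl fun j hj => by rw [hy' j hj]
  refine ⟨?_, fun t => ?_⟩
  · have := h.1
    rw [split₀, split₀ y, splitp y] at this
    rw [splitp y', sum_congr rfl hy']
    linarith
  set ψ : ℝ → ℝ := fun t => ∑ j ∈ s.erase i₀, (x j - t)⁺
  set G : ℝ → ℝ := fun t => ∑ j ∈ S, (y j - t)⁺
  have hmaj : ∀ t, (c - t)⁺ + ψ t ≤ (b - t)⁺ + ((a - t)⁺ + G t) := fun t => by
    have := h.2 t
    rwa [split₀, split₀ (fun j => (y j - t)⁺), splitp (fun j => (y j - t)⁺)] at this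
  suffices ψ t ≤ (d - t)⁺ + G t by
    rw [splitp (fun j => (y' j - t)⁺), hS (fun v => (v - t)⁺)]
    exact this
  have low : ∀ t ≤ a, ψ t ≤ (d - t)⁺ + G t := fun t ht => by
    have := hmaj t
    rw [posPart_eq_self.2 (by linarith : 0 ≤ c - t), posPart_eq_self.2 (by linarith : 0 ≤ b - t),
      posPart_eq_self.2 (sub_nonneg.2 ht)] at this
    linarith [le_posPart (d - t)]
  rcases le_or_gt t a with hta | hat
  · exact low t hta
  rcases le_or_gt c t with hct | htc
  · have : ψ t = 0 := sum_eq_zero fun j hj =>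
      posPart_eq_zero.2 (by linarith [hmax j (mem_of_mem_erase hj)])
    rw [this]
    exact add_nonneg (posPart_nonneg _) (sum_nonneg fun _ _ => posPart_nonneg _)
  -- If at most `k` of the `x j` exceed `t`, the `k` entries `y j ≥ b` dominate them; otherwise
  -- interpolate from the bound at `t = a`.
  set m : ℕ := #{j ∈ s.erase i₀ | t < x j}
  set k : ℕ := #{j ∈ S | b ≤ y j}
  have hψc : ψ t ≤ m * (c - t) :=
    sum_posPart_sub_le_card_filter_mul fun j hj => hmax j (mem_of_mem_erase hj)
  have hψa : ψ t ≤ ψ a - m * (t - a) := sum_posPart_sub_le_sub_card_filter_mul hat.le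
  have hGb : k * (b - t) ≤ G t := card_filter_mul_le_sum_posPart_sub
  have hGa : G a ≤ G t + k * (t - a) := sum_posPart_sub_le_add_card_filter_mul
    (fun j hj => hgap j (mem_of_mem_erase hj)) hat.le (htc.le.trans hyi₀)
  have hψa' := low a le_rfl
  rw [posPart_eq_self.2 (by linarith : 0 ≤ d - a)] at hψa'
  rcases le_or_gt m k with hmk | hkm
  · calc ψ t ≤ m * (c - t) := hψc
      _ ≤ k * (b - t) :=
        mul_le_mul (by exact_mod_cast hmk) (by linarith) (by linarith) (by positivity)
      _ ≤ G t := hGb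
      _ ≤ (d - t)⁺ + G t := le_add_of_nonneg_left (posPart_nonneg _)
  · have : ((k : ℝ) + 1) * (t - a) ≤ m * (t - a) :=
      mul_le_mul_of_nonneg_right (by exact_mod_cast Nat.succ_le_of_lt hkm) (by linarith)
    linarith [le_posPart (d - t)]

theorem exists_tTransform_erase_of_max (h : IsMajorizedOn s x y) (hs : 2 ≤ s.card) {i₀ : ι}
    (hi₀ : i₀ ∈ s) (hmax : ∀ i ∈ s, x i ≤ x i₀) (hyi₀ : x i₀ ≤ y i₀)
    (hmin : ∀ j ∈ s, x i₀ ≤ y j → y i₀ ≤ y j) :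
    ∃ p ∈ s, ∃ μ ∈ Set.Icc (0 : ℝ) 1, tTransform μ p i₀ y i₀ = x i₀ ∧
      IsMajorizedOn (s.erase i₀) x (tTransform μ p i₀ y) := by
  have hlow : {j ∈ s.erase i₀ | y j ≤ x i₀}.Nonempty := by
    by_contra hempty
    rw [not_nonempty_iff_eq_empty, filter_eq_empty_iff] at hempty
    have hne : (s.erase i₀).Nonempty := by
      rw [← card_pos, card_erase_of_mem hi₀]
      omega
    have hy : ∑ j ∈ s.erase i₀, x i₀ < ∑ j ∈ s.erase i₀, y j :=
      sum_lt_sum_of_nonempty hne fun j hj => lt_of_not_ge (hempty hj)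
    have hx : ∑ j ∈ s.erase i₀, x j ≤ ∑ j ∈ s.erase i₀, x i₀ :=
      sum_le_sum fun j hj => hmax j (mem_of_mem_erase hj)
    have := h.1
    rw [← add_sum_erase s _ hi₀, ← add_sum_erase s y hi₀] at this
    linarith
  obtain ⟨p, hpmem, hpmax⟩ := exists_max_image _ y hlow
  obtain ⟨hp, hpc⟩ := mem_filter.1 hpmem
  -- `μ = 0` when `y p = y i₀`, by the convention `r / 0 = 0`
  set μ := (y i₀ - x i₀) / (y i₀ - y p)
  have hμ : μ ∈ Set.Icc (0 : ℝ) 1 :=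
    ⟨div_nonneg (by linarith) (by linarith), div_le_one_of_le₀ (by linarith) (by linarith)⟩
  have hi₀' : tTransform μ p i₀ y i₀ = x i₀ := by
    simp only [tTransform, Equiv.swap_apply_right]
    rcases eq_or_ne (y i₀) (y p) with heq | hne
    · simp only [μ, heq, sub_self, div_zero]
      linarith
    · simp only [μ]
      field_simp [sub_ne_zero.2 hne]
      ring
  refine ⟨p, mem_of_mem_erase hp, μ, hμ, hi₀', h.erase hi₀ hp hmax hpc hyi₀ ?_ hi₀' ?_ ?_⟩
  · intro j hj
    by_cases hyj : y j ≤ x i₀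
    · exact .inl (hpmax j (mem_filter.2 ⟨hj, hyj⟩))
    · exact .inr (hmin j (mem_of_mem_erase hj) (le_of_not_ge hyj))
  · simp only [tTransform, Equiv.swap_apply_left, Equiv.swap_apply_right]
    ring
  · intro j hj
    simp only [tTransform, Equiv.swap_apply_of_ne_of_ne (ne_of_mem_erase hj)
      (ne_of_mem_erase (mem_of_mem_erase hj))]
    ring

theorem exists_tTransform_erase (h : IsMajorizedOn s x y) (hs : 2 ≤ s.card) :
    ∃ i₀ ∈ s, ∃ q ∈ s, ∃ p ∈ s, ∃ μ ∈ Set.Icc (0 : ℝ) 1,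
      tTransform μ p i₀ (y ∘ Equiv.swap i₀ q) i₀ = x i₀ ∧
      IsMajorizedOn (s.erase i₀) x (tTransform μ p i₀ (y ∘ Equiv.swap i₀ q)) := by
  obtain ⟨i₀, hi₀, hmax⟩ := s.exists_max_image x (card_pos.1 (by omega))
  obtain ⟨j, hj, hxj⟩ := h.exists_le hi₀
  obtain ⟨q, hqmem, hqmin⟩ := exists_min_image {j ∈ s | x i₀ ≤ y j} y ⟨j, mem_filter.2 ⟨hj, hxj⟩⟩
  obtain ⟨hq, hxq⟩ := mem_filter.1 hqmem
  have hswap : ∀ j ∈ s, Equiv.swap i₀ q j ∈ s := fun j hj => by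
    rw [Equiv.swap_apply_def]
    split_ifs <;> assumption
  refine ⟨i₀, hi₀, q, hq, (h.comp_swap hi₀ hq).exists_tTransform_erase_of_max hs hi₀ hmax ?_ ?_⟩
  · simpa using hxq
  · intro j hj hxj
    simpa using hqmin _ (mem_filter.2 ⟨hswap j hj, hxj⟩)

theorem isDyadicUnitaryAverage_diagonal [Fintype ι] {k : ℕ} (hs : s.card ≤ k + 1)
    (hoff : ∀ i ∉ s, x i = y i) (h : IsMajorizedOn s x y) :
    IsDyadicUnitaryAverage k (diagonal fun i => (x i : ℂ)) (diagonal fun i => (y i : ℂ)) := by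
  induction k generalizing s y with
  | zero => rw [h.eq_of_card_le_one hs hoff]; exact .refl 0 _
  | succ k ih =>
    by_cases hs1 : s.card ≤ 1
    · rw [h.eq_of_card_le_one hs1 hoff]
      exact .refl _ _
    obtain ⟨i₀, hi₀, q, hq, p, hp, μ, hμ, hx, h'⟩ := h.exists_tTransform_erase (by omega)
    have hoff' : ∀ i ∉ s.erase i₀, x i = tTransform μ p i₀ (y ∘ Equiv.swap i₀ q) i := by
      intro i hi
      rcases eq_or_ne i i₀ with rfl | hne
      · exact hx.symm
      have his : i ∉ s := fun his => hi (mem_erase.2 ⟨hne, his⟩)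
      have hfix : ∀ {a b}, a ∈ s → b ∈ s → Equiv.swap a b i = i := fun ha hb =>
        Equiv.swap_apply_of_ne_of_ne (fun h => his (h ▸ ha)) (fun h => his (h ▸ hb))
      simp only [tTransform, Function.comp, hfix hp hi₀, hfix hi₀ hq, hoff i his]
      ring
    exact ((ih (by rw [card_erase_of_mem hi₀]; omega) hoff' h').trans
      (isDyadicUnitaryAverage_diagonal_tTransform _ _ _ hμ)).trans
      (isDyadicUnitaryAverage_diagonal_comp_swap _ _ _)

end IsMajorizedOn

end Majorization

theorem stmt_12_general (n : ℕ) (A B : ℕ → Matrix (Fin n) (Fin n) ℂ)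
    (hmaj : ∀ k, ∃ (lA lB : Fin n → ℝ) (UA UB : Matrix (Fin n) (Fin n) ℂ)
        (X : Matrix (Fin n) (Fin n) ℝ),
      UAᴴ * UA = 1 ∧ UA * UAᴴ = 1 ∧ UBᴴ * UB = 1 ∧ UB * UBᴴ = 1 ∧
      A k = UAᴴ * Matrix.diagonal (fun i => (lA i : ℂ)) * UA ∧
      B k = UBᴴ * Matrix.diagonal (fun i => (lB i : ℂ)) * UB ∧
      IsDoublyStochastic X ∧ X *ᵥ lB = lA) :
    ∃ U : Fin (2 ^ (n - 1)) → ℕ → Matrix (Fin n) (Fin n) ℂ,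
      (∀ i k, (U i k)ᴴ * U i k = 1 ∧ U i k * (U i k)ᴴ = 1) ∧
      ∀ k, A k = ∑ i, ((1 : ℂ) / 2 ^ (n - 1)) • ((U i k)ᴴ * B k * U i k) := by
  have hav : ∀ k, IsDyadicUnitaryAverage (n - 1) (A k) (B k) := by
    intro k
    obtain ⟨lA, lB, UA, UB, X, hUA, hUA', hUB, hUB', hAk, hBk, hX, hXl⟩ := hmaj k
    have hdiag := (isMajorizedOn_univ_mulVec (mem_doublyStochastic_iff_sum.2 hX) lB
      ).isDyadicUnitaryAverage_diagonal (k := n - 1)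
        (by rw [card_univ, Fintype.card_fin]; omega) (by simp)
    rw [hXl] at hdiag
    have hA := hAk ▸ IsDyadicUnitaryAverage.conj (Unitary.mem_iff.2 ⟨hUA, hUA'⟩) _
    have hB := hBk ▸ IsDyadicUnitaryAverage.conj_symm (Unitary.mem_iff.2 ⟨hUB, hUB'⟩) _
    simpa using (hA.trans hdiag).trans hB
  choose U hU hAU using hav
  exact ⟨fun i k => U k i, fun i k => Unitary.mem_iff.1 (hU k i), hAU⟩

theorem stmt_12 (n : ℕ) (A B : ℕ → Matrix (Fin n) (Fin n) ℂ)
    (hAbdd : ∃ C : ℝ, ∀ k i j, ‖A k i j‖ ≤ C)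
    (hBbdd : ∃ C : ℝ, ∀ k i j, ‖B k i j‖ ≤ C)
    (hA : ∀ k, (A k)ᴴ = A k) (hB : ∀ k, (B k)ᴴ = B k)
    (hmaj : ∀ k, ∃ (lA lB : Fin n → ℝ) (UA UB : Matrix (Fin n) (Fin n) ℂ)
        (X : Matrix (Fin n) (Fin n) ℝ),
      UAᴴ * UA = 1 ∧ UA * UAᴴ = 1 ∧ UBᴴ * UB = 1 ∧ UB * UBᴴ = 1 ∧
      A k = UAᴴ * Matrix.diagonal (fun i => (lA i : ℂ)) * UA ∧
      B k = UBᴴ * Matrix.diagonal (fun i => (lB i : ℂ)) * UB ∧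
      IsDoublyStochastic X ∧ X *ᵥ lB = lA) :
    ∃ U : Fin (2 ^ (n - 1)) → ℕ → Matrix (Fin n) (Fin n) ℂ,
      (∀ i k, (U i k)ᴴ * U i k = 1 ∧ U i k * (U i k)ᴴ = 1) ∧
      ∀ k, A k = ∑ i, ((1 : ℂ) / 2 ^ (n - 1)) • ((U i k)ᴴ * B k * U i k) :=
  stmt_12_general n A B hmaj
end

section
/- Let A, B be self-adjoint n×n complex matrices, and suppose A lies in the norm closure of the convex hull of the unitary orbit {U*BU : U unitary}. Then there exists a doubly stochastic matrix X with X·λ(B) = λ(A), where λ(A), λ(B) are eigenvalue vectors of A and B. -/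
/-!
Read off diagonals in an eigenbasis of `A`: `d S := Re diag (V_Aᴴ S V_A)` is real-linear,
continuous, and `d A = λ(A)`. If `B = V_B diag(λ(B)) V_Bᴴ` and `U` is unitary, then with the
unitary `M = V_Aᴴ Uᴴ V_B` we get `d (Uᴴ B U) = Re diag (M diag(λ(B)) Mᴴ) = (|M_pq|²) λ(B)`, and
`(|M_pq|²)` is doubly stochastic. So `d` maps the unitary orbit of `B` into
`{X λ(B) | X doubly stochastic}`, which is convex and compact (by Birkhoff's theorem it is the
image of the convex hull of the finitely many permutation matrices); hence `d` also maps the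
closed convex hull of the orbit, which contains `A`, into it.
-/

open Matrix

section ClosedConvexHull

variable {𝕜 E F : Type*} [Semiring 𝕜] [PartialOrder 𝕜] [AddCommMonoid E] [Module 𝕜 E]
  [TopologicalSpace E] [AddCommMonoid F] [Module 𝕜 F] [TopologicalSpace F]

lemma Set.MapsTo.closure_convexHull {f : E →ₗ[𝕜] F} (hf : Continuous f) {s : Set E} {K : Set F}
    (hK : Convex 𝕜 K) (hKc : IsClosed K) (hs : Set.MapsTo f s K) :
    Set.MapsTo f (closure (convexHull 𝕜 s)) K :=
  closure_minimal (convexHull_min hs (hK.linear_preimage f)) (hKc.preimage hf)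

end ClosedConvexHull

namespace Matrix

variable {n : Type*} [Fintype n]

lemma re_mul_conjTranspose_apply_self (W : Matrix n n ℂ) (p : n) :
    ((W * Wᴴ) p p).re = ∑ q, Complex.normSq (W p q) := by
  simp [mul_apply, Complex.mul_conj, Complex.re_sum]

lemma re_conjTranspose_mul_apply_self (W : Matrix n n ℂ) (q : n) :
    ((Wᴴ * W) q q).re = ∑ p, Complex.normSq (W p q) := by
  simp [mul_apply, Complex.conj_mul', Complex.re_sum, Complex.normSq_eq_norm_sq]
  norm_cast

lemma re_mul_diagonal_mul_conjTranspose_apply_self [DecidableEq n] (W : Matrix n n ℂ)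
    (l : n → ℝ) (p : n) :
    ((W * diagonal (fun q => (l q : ℂ)) * Wᴴ) p p).re = (W.map Complex.normSq *ᵥ l) p := by
  simp only [mul_apply, diagonal_apply, mul_ite, mul_zero, conjTranspose_apply, Complex.re_sum,
    mulVec, dotProduct, map_apply]
  refine Finset.sum_congr rfl fun q _ => ?_
  simp [Complex.normSq_apply]
  ring

variable [DecidableEq n]

lemma map_normSq_mem_doublyStochastic {W : Matrix n n ℂ} (hW : W ∈ unitaryGroup n ℂ) :
    W.map Complex.normSq ∈ doublyStochastic ℝ n := by
  refine mem_doublyStochastic_iff_sum.mpr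
    ⟨fun p q => Complex.normSq_nonneg _, fun p => ?_, fun q => ?_⟩
  · simp only [map_apply]
    rw [← re_mul_conjTranspose_apply_self, ← star_eq_conjTranspose, mem_unitaryGroup_iff.mp hW]
    simp
  · simp only [map_apply]
    rw [← re_conjTranspose_mul_apply_self, ← star_eq_conjTranspose, mem_unitaryGroup_iff'.mp hW]
    simp

lemma convex_image_mulVec_doublyStochastic (l : n → ℝ) :
    Convex ℝ ((· *ᵥ l) '' (doublyStochastic ℝ n : Set (Matrix n n ℝ))) :=
  convex_doublyStochastic.linear_image ((mulVecBilin ℝ ℝ).flip l)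

lemma isCompact_image_mulVec_doublyStochastic (l : n → ℝ) :
    IsCompact ((· *ᵥ l) '' (doublyStochastic ℝ n : Set (Matrix n n ℝ))) := by
  rw [doublyStochastic_eq_convexHull_permMatrix (R := ℝ)]
  exact ((Set.finite_range _).isCompact_convexHull ℝ).image
    ((mulVecBilin ℝ ℝ).flip l).continuous_of_finiteDimensional

lemma IsHermitian.eq_mul_diagonal_mul_conjTranspose {A : Matrix n n ℂ} (hA : A.IsHermitian) :
    A = (hA.eigenvectorUnitary : Matrix n n ℂ) * diagonal (fun i => (hA.eigenvalues i : ℂ)) *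
      (hA.eigenvectorUnitary : Matrix n n ℂ)ᴴ := by
  simpa [Function.comp_def, ← star_eq_conjTranspose] using hA.spectral_theorem

def unitaryOrbit (B : Matrix n n ℂ) : Set (Matrix n n ℂ) :=
  Set.range fun U : unitaryGroup n ℂ => (U : Matrix n n ℂ)ᴴ * B * U

lemma setOf_sum_smul_conj_subset_convexHull_unitaryOrbit (B : Matrix n n ℂ) :
    {S : Matrix n n ℂ | ∃ (k : ℕ) (t : Fin k → ℝ) (U : Fin k → Matrix n n ℂ),
        (∀ i, 0 ≤ t i) ∧ (∑ i, t i = 1) ∧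
        (∀ i, (U i)ᴴ * U i = 1 ∧ U i * (U i)ᴴ = 1) ∧
        S = ∑ i, (t i : ℂ) • ((U i)ᴴ * B * U i)} ⊆ convexHull ℝ (unitaryOrbit B) := by
  rintro _ ⟨k, t, U, ht, ht₁, hU, rfl⟩
  simp only [Complex.coe_smul]
  exact (convex_convexHull ℝ _).sum_mem (fun i _ => ht i) ht₁
    fun i _ => subset_convexHull ℝ _ ⟨⟨U i, mem_unitaryGroup_iff.mpr (hU i).2⟩, rfl⟩

noncomputable def conjDiagRe (V : Matrix n n ℂ) : Matrix n n ℂ →ₗ[ℝ] n → ℝ :=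
  Complex.reLm.compLeft n ∘ₗ diagLinearMap n ℝ ℂ ∘ₗ
    LinearMap.mulLeft ℝ Vᴴ ∘ₗ LinearMap.mulRight ℝ V

lemma conjDiagRe_apply (V S : Matrix n n ℂ) (p : n) :
    conjDiagRe V S p = ((Vᴴ * S * V) p p).re := by
  simp [conjDiagRe, Matrix.mul_assoc]

lemma conjDiagRe_mul_diagonal_mul_conjTranspose {V : Matrix n n ℂ}
    (hV : V ∈ unitaryGroup n ℂ) (l : n → ℝ) :
    conjDiagRe V (V * diagonal (fun q => (l q : ℂ)) * Vᴴ) = l := by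
  funext p
  rw [conjDiagRe_apply, ← star_eq_conjTranspose, ← Matrix.mul_assoc, ← Matrix.mul_assoc,
    mem_unitaryGroup_iff'.mp hV, Matrix.mul_assoc, mem_unitaryGroup_iff'.mp hV]
  simp

lemma mapsTo_conjDiagRe_unitaryOrbit {V W B : Matrix n n ℂ} (hV : V ∈ unitaryGroup n ℂ)
    (hW : W ∈ unitaryGroup n ℂ) {l : n → ℝ} (hB : B = W * diagonal (fun q => (l q : ℂ)) * Wᴴ) :
    Set.MapsTo (conjDiagRe V) (unitaryOrbit B)
      ((· *ᵥ l) '' (doublyStochastic ℝ n : Set (Matrix n n ℝ))) := by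
  rintro _ ⟨U, rfl⟩
  set M := Vᴴ * (U : Matrix n n ℂ)ᴴ * W
  have hM : M ∈ unitaryGroup n ℂ :=
    mul_mem (mul_mem (Unitary.star_mem hV) (Unitary.star_mem U.2)) hW
  refine ⟨M.map Complex.normSq, map_normSq_mem_doublyStochastic hM, funext fun p => ?_⟩
  have hconj : Vᴴ * ((U : Matrix n n ℂ)ᴴ * B * U) * V =
      M * diagonal (fun q => (l q : ℂ)) * Mᴴ := by
    simp only [M, hB, conjTranspose_mul, conjTranspose_conjTranspose, Matrix.mul_assoc]
  rw [conjDiagRe_apply, hconj, re_mul_diagonal_mul_conjTranspose_apply_self]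

end Matrix

theorem stmt_16 (n : ℕ) (A B : Matrix (Fin n) (Fin n) ℂ)
    (hA : Aᴴ = A) (hB : Bᴴ = B)
    (hclos : A ∈ closure {S : Matrix (Fin n) (Fin n) ℂ |
      ∃ (k : ℕ) (t : Fin k → ℝ) (U : Fin k → Matrix (Fin n) (Fin n) ℂ),
        (∀ i, 0 ≤ t i) ∧ (∑ i, t i = 1) ∧
        (∀ i, (U i)ᴴ * U i = 1 ∧ U i * (U i)ᴴ = 1) ∧
        S = ∑ i, (t i : ℂ) • ((U i)ᴴ * B * U i)}) :
    ∃ (lA lB : Fin n → ℝ) (UA UB : Matrix (Fin n) (Fin n) ℂ)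
        (X : Matrix (Fin n) (Fin n) ℝ),
      UAᴴ * UA = 1 ∧ UA * UAᴴ = 1 ∧ UBᴴ * UB = 1 ∧ UB * UBᴴ = 1 ∧
      A = UAᴴ * Matrix.diagonal (fun i => (lA i : ℂ)) * UA ∧
      B = UBᴴ * Matrix.diagonal (fun i => (lB i : ℂ)) * UB ∧
      IsDoublyStochastic X ∧ X *ᵥ lB = lA := by
  have hA' : A.IsHermitian := hA
  have hB' : B.IsHermitian := hB
  set VA := hA'.eigenvectorUnitary
  set VB := hB'.eigenvectorUnitary
  have hAdec := hA'.eq_mul_diagonal_mul_conjTranspose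
  have hBdec := hB'.eq_mul_diagonal_mul_conjTranspose
  obtain ⟨X, hX, hXlB⟩ :=
    (mapsTo_conjDiagRe_unitaryOrbit VA.2 VB.2 hBdec).closure_convexHull
      (conjDiagRe (VA : Matrix (Fin n) (Fin n) ℂ)).continuous_of_finiteDimensional
      (convex_image_mulVec_doublyStochastic _)
      (isCompact_image_mulVec_doublyStochastic _).isClosed
      (closure_mono (setOf_sum_smul_conj_subset_convexHull_unitaryOrbit B) hclos)
  rw [hAdec, conjDiagRe_mul_diagonal_mul_conjTranspose VA.2] at hXlB
  refine ⟨_, _, (VA : Matrix (Fin n) (Fin n) ℂ)ᴴ, (VB : Matrix (Fin n) (Fin n) ℂ)ᴴ, X,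
    ?_, ?_, ?_, ?_, ?_, ?_, mem_doublyStochastic_iff_sum.mp hX, hXlB⟩ <;>
    rw [conjTranspose_conjTranspose]
  exacts [Unitary.coe_mul_star_self VA, Unitary.coe_star_mul_self VA,
    Unitary.coe_mul_star_self VB, Unitary.coe_star_mul_self VB, hAdec, hBdec]
end
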